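/- Let a be a symmetric, primitive random walk on ℤ all of whose step sizes are odd, with characteristic function f(x) = ∑_{k∈ℤ} a(k) e^{ikx} and return probabilities c_n. Suppose η ∈ (0,1) and φ : [1−η, 1] → [0, π/2] is continuous on [1−η, 1], continuously differentiable on (1−η, 1), satisfies φ(1) = 0 and f(φ(y)) = y for all y ∈ [1−η, 1]. Then there exists μ > 0 such that c_{2n} + (2/π) ∫_{1−η}^{1} y^{2n} φ'(y) dy = o(e^{−2μn}) as n → ∞. -/

import Mathlib

open Filter Asymptotics

/-- A random walk on `ℤ`: nonnegative step probabilities summing to `1`,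
with `limsup a(n)^(1/n) < 1` (taken over both tails). -/
def IsRandomWalk (a : ℤ → ℝ) : Prop :=
  (∀ n : ℤ, 0 ≤ a n) ∧ (∑' n : ℤ, a n) = 1 ∧
    Filter.limsup (fun n : ℕ => (max (a (n : ℤ)) (a (-(n : ℤ)))) ^ (1 / (n : ℝ)))
      Filter.atTop < 1

/-- The `n`-th return probability of the random walk `a`: the value at `0` of the
`n`-fold convolution of `a` with itself. -/
noncomputable def returnProb (a : ℤ → ℝ) (n : ℕ) : ℝ :=
  ∑' k : Fin n → ℤ, if (∑ i, k i) = 0 then ∏ i, a (k i) else 0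

/-- The characteristic function `f(x) = ∑_{k ∈ ℤ} a(k) e^{i k x}` of the walk `a`. -/
noncomputable def charFun (a : ℤ → ℝ) (x : ℝ) : ℂ :=
  ∑' k : ℤ, (a k : ℂ) * Complex.exp (Complex.I * k * x)

/-!
For a symmetric walk the characteristic function is the real cosine series
`G x = ∑ a k * cos (k x)`, and Fourier inversion gives `c_{2n} = (2π)⁻¹ ∫_{-π}^{π} G^{2n}`.
Since `G` is even and, all steps being odd, `G (π - x) = -G x`, this is
`(2/π) ∫_0^{π/2} G^{2n}`. The substitution `x = φ y` turns `∫_{1-η}^1 y^{2n} φ' y dy` into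
`-∫_0^{φ(1-η)} G^{2n}`, so the quantity to estimate is `(2/π) ∫_{φ(1-η)}^{π/2} G^{2n}`.
On this compact interval, which stays away from `0`, primitivity forces `|G| < 1`, hence
`|G| ≤ M < 1` and the integral is `O(M^{2n})`.
-/

open MeasureTheory hiding charFun
open Set Real ComplexConjugate

lemma norm_exp_I_mul_int_mul (k : ℤ) (x : ℝ) : ‖Complex.exp (Complex.I * k * x)‖ = 1 := by
  rw [show Complex.I * k * x = ((k * x : ℝ) : ℂ) * Complex.I by push_cast; ring,
    Complex.norm_exp_ofReal_mul_I]

lemma integral_exp_I_mul_int_mul (m : ℤ) :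
    ∫ x in -π..π, Complex.exp (Complex.I * m * x) = if m = 0 then ((2 * π : ℝ) : ℂ) else 0 := by
  split_ifs with hm
  · simp [hm, two_mul]
  have hI : Complex.I * m ≠ 0 := mul_ne_zero Complex.I_ne_zero (by exact_mod_cast hm)
  have hper : Complex.exp (Complex.I * m * π) = Complex.exp (Complex.I * m * (-π : ℝ)) := by
    rw [show Complex.I * m * π = Complex.I * m * (-π : ℝ) + m * (2 * π * Complex.I) by
      push_cast; ring, Complex.exp_add, Complex.exp_int_mul_two_pi_mul_I, mul_one]
  simp only [integral_exp_mul_complex hI, hper, sub_self, zero_div]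

lemma summable_prod_fin {ι : Type*} {g : ι → ℝ} (hg0 : 0 ≤ g) (hg : Summable g) (n : ℕ) :
    Summable fun k : Fin n → ι => ∏ i, g (k i) := by
  induction n with
  | zero => exact .of_finite
  | succ n ih =>
    have := hg.mul_of_nonneg ih hg0 fun k => Finset.prod_nonneg fun i _ => hg0 _
    refine ((Fin.consEquiv fun _ => ι).symm.summable_iff.2 this).congr fun k => ?_
    simp [Fin.prod_univ_succ, Fin.consEquiv, Fin.tail]

lemma tsum_pow_eq_tsum_prod {ι 𝕜 : Type*} [NormedField 𝕜] [CompleteSpace 𝕜] {f : ι → 𝕜}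
    (hf : Summable fun k => ‖f k‖) (n : ℕ) :
    (∑' k, f k) ^ n = ∑' k : Fin n → ι, ∏ i, f (k i) := by
  induction n with
  | zero => simp
  | succ n ih =>
    have hprod : Summable fun k : Fin n → ι => ‖∏ i, f (k i)‖ := by
      simpa only [norm_prod] using summable_prod_fin (fun _ => norm_nonneg _) hf n
    rw [pow_succ', ih, tsum_mul_tsum_of_summable_norm hf hprod,
      ← (Fin.consEquiv fun _ => ι).symm.tsum_eq]
    refine tsum_congr fun k => ?_
    simp [Fin.prod_univ_succ, Fin.consEquiv, Fin.tail]

lemma integral_eq_four_mul_integral_of_symm {h : ℝ → ℝ} (hc : Continuous h) (p : ℝ)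
    (heven : ∀ x, h (-x) = h x) (hrefl : ∀ x, h (p - x) = h x) :
    ∫ x in -p..p, h x = 4 * ∫ x in 0..p / 2, h x := by
  have hneg : ∫ x in -p..0, h x = ∫ x in 0..p, h x := by
    simpa [heven] using (intervalIntegral.integral_comp_neg (a := 0) (b := p) h).symm
  have hsub : ∫ x in p / 2..p, h x = ∫ x in 0..p / 2, h x := by
    have := intervalIntegral.integral_comp_sub_left (a := 0) (b := p / 2) h p
    simp only [hrefl, sub_zero, sub_half] at this
    exact this.symm
  rw [← intervalIntegral.integral_add_adjacent_intervals (b := 0) (hc.intervalIntegrable _ _)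
    (hc.intervalIntegrable _ _), hneg,
    ← intervalIntegral.integral_add_adjacent_intervals (b := p / 2) (hc.intervalIntegrable _ _)
    (hc.intervalIntegrable _ _), hsub]
  ring

lemma AntitoneOn.intervalIntegrable_deriv {f : ℝ → ℝ} {u v : ℝ} (hf : AntitoneOn f (uIcc u v)) :
    IntervalIntegrable (deriv f) volume u v := by
  simpa [deriv.neg', Pi.neg_def] using hf.neg.intervalIntegrable_deriv.neg

lemma integral_comp_mul_deriv_of_leftInvOn {φ ψ h : ℝ → ℝ} {u v : ℝ} (huv : u ≤ v)
    (hφ : ContinuousOn φ (Icc u v)) (hdiff : ∀ y ∈ Ioo u v, DifferentiableAt ℝ φ y)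
    (hφ' : IntervalIntegrable (deriv φ) volume u v) (hinv : LeftInvOn ψ φ (Icc u v))
    (hψ : Continuous ψ) (hh : Continuous h) :
    ∫ y in u..v, h y * deriv φ y = ∫ x in φ u..φ v, h (ψ x) := by
  have hhψ : Continuous (h ∘ ψ) := hh.comp hψ
  have hφ'' := (intervalIntegrable_iff_integrableOn_Icc_of_le huv).1 hφ'
  rw [← uIcc_of_le huv] at hφ hinv hφ''
  have key := intervalIntegral.integral_deriv_smul_comp''' hφ
    (by simpa [huv] using fun y hy => (hdiff y hy).hasDerivAt.hasDerivWithinAt) hhψ.continuousOn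
    (hhψ.continuousOn.integrableOn_compact (isCompact_uIcc.image_of_continuousOn hφ))
    (hφ''.mul_continuousOn (hhψ.comp_continuousOn hφ) isCompact_uIcc)
  refine (intervalIntegral.integral_congr fun y hy => ?_).trans key
  simp [hinv hy, mul_comm]

lemma exists_isLittleO_exp_of_lt_one {M : ℝ} (h0 : 0 ≤ M) (h1 : M < 1) :
    ∃ μ > 0, (fun n : ℕ => M ^ n) =o[atTop] fun n => exp (-μ * n) := by
  have hr : 0 < (1 + M) / 2 := by positivity
  refine ⟨-log ((1 + M) / 2), neg_pos.2 (log_neg hr (by linarith)), ?_⟩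
  convert isLittleO_pow_pow_of_lt_left h0 (by linarith : M < (1 + M) / 2) using 2 with n
  rw [neg_neg, ← rpow_natCast, rpow_def_of_pos hr]

lemma exists_isLittleO_integral_pow {g : ℝ → ℝ} {c d : ℝ} (hcd : c ≤ d)
    (hg : ContinuousOn g (Icc c d)) (hlt : ∀ x ∈ Icc c d, |g x| < 1) :
    ∃ μ > 0, (fun n : ℕ => ∫ x in c..d, g x ^ n) =o[atTop] fun n => exp (-μ * n) := by
  obtain ⟨x₀, hx₀, hmax⟩ := isCompact_Icc.exists_isMaxOn (nonempty_Icc.2 hcd) hg.abs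
  obtain ⟨μ, hμ, ho⟩ := exists_isLittleO_exp_of_lt_one (abs_nonneg (g x₀)) (hlt x₀ hx₀)
  refine ⟨μ, hμ, IsBigO.trans_isLittleO (.of_bound (d - c) (.of_forall fun n => ?_)) ho⟩
  calc ‖∫ x in c..d, g x ^ n‖ ≤ |g x₀| ^ n * |d - c| := by
        refine intervalIntegral.norm_integral_le_of_norm_le_const fun x hx => ?_
        rw [uIoc_of_le hcd] at hx
        simpa [abs_pow] using pow_le_pow_left₀ (abs_nonneg _) (hmax (Ioc_subset_Icc_self hx)) n
    _ = (d - c) * ‖|g x₀| ^ n‖ := by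
        rw [abs_of_nonneg (sub_nonneg.2 hcd), norm_pow, norm_abs_eq_norm, Real.norm_eq_abs]; ring

lemma IsRandomWalk.hasSum {a : ℤ → ℝ} (ha : IsRandomWalk a) : HasSum a 1 := by
  have hsum : Summable a := by
    by_contra h
    simpa [tsum_eq_zero_of_not_summable h] using ha.2.1
  exact ha.2.1 ▸ hsum.hasSum

noncomputable def cosSeries (a : ℤ → ℝ) (x : ℝ) : ℝ := ∑' k : ℤ, a k * cos (k * x)

section CosSeries

variable {a : ℤ → ℝ}

lemma summable_mul_cos (ha : Summable a) (x : ℝ) :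
    Summable fun k : ℤ => a k * cos (k * x) :=
  ha.norm.of_norm_bounded fun k => by
    simpa [abs_mul] using mul_le_of_le_one_right (abs_nonneg (a k)) (abs_cos_le_one (k * x))

lemma continuous_cosSeries (ha : Summable a) : Continuous (cosSeries a) :=
  continuous_tsum (fun k => by fun_prop) ha.norm fun k x => by
    simpa [abs_mul] using mul_le_of_le_one_right (abs_nonneg (a k)) (abs_cos_le_one (k * x))

lemma cosSeries_zero : cosSeries a 0 = ∑' k, a k := by
  simp [cosSeries]

lemma cosSeries_neg (x : ℝ) : cosSeries a (-x) = cosSeries a x := by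
  simp [cosSeries]

lemma cosSeries_pi_sub (hodd : ∀ k : ℤ, a k ≠ 0 → Odd k) (x : ℝ) :
    cosSeries a (π - x) = -cosSeries a x := by
  rw [cosSeries, cosSeries, ← tsum_neg]
  refine tsum_congr fun k => ?_
  by_cases hk : a k = 0
  · simp [hk]
  obtain ⟨m, rfl⟩ := hodd k hk
  have : ((2 * m + 1 : ℤ) : ℝ) * (π - x) = π - (2 * m + 1 : ℤ) * x + m * (2 * π) := by
    push_cast; ring
  rw [this, cos_add_int_mul_two_pi, cos_pi_sub, mul_neg]

lemma charFun_eq_cosSeries (ha : Summable a) (hsym : ∀ k, a k = a (-k)) (x : ℝ) :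
    charFun a x = cosSeries a x := by
  have hconj : conj (charFun a x) = charFun a x := by
    rw [charFun, Complex.conj_tsum, ← (Equiv.neg ℤ).tsum_eq]
    refine tsum_congr fun k => ?_
    rw [map_mul, Complex.conj_ofReal, ← Complex.exp_conj, Equiv.neg_apply, ← hsym]
    congr 2
    simp
  have hsum : Summable fun k : ℤ => (a k : ℂ) * Complex.exp (Complex.I * k * x) :=
    .of_norm_bounded ha.norm fun k => by
      rw [norm_mul, norm_exp_I_mul_int_mul, mul_one, Complex.norm_real]
  rw [← Complex.conj_eq_iff_re.1 hconj, charFun, Complex.re_tsum hsum, cosSeries]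
  congr 1
  refine tsum_congr fun k => ?_
  rw [show Complex.I * k * x = ((k * x : ℝ) : ℂ) * Complex.I by push_cast; ring,
    Complex.re_ofReal_mul, Complex.exp_ofReal_mul_I_re]

lemma exists_abs_cos_lt_one (hprim : AddSubgroup.closure {k : ℤ | a k ≠ 0} = ⊤) {x : ℝ}
    (hx : x ∈ Ioo 0 π) : ∃ k, a k ≠ 0 ∧ |cos (k * x)| < 1 := by
  by_contra! h
  -- `|cos (k x)| = 1` puts every step in the subgroup `{k | k x ∈ πℤ}`, hence also `1`.
  have hle : AddSubgroup.closure {k : ℤ | a k ≠ 0} ≤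
      (AddSubgroup.zmultiples π).comap (zmultiplesHom ℝ x) := by
    refine (AddSubgroup.closure_le _).2 fun k hk => ?_
    have hsin : sin (k * x) = 0 := by
      nlinarith [sin_sq_add_cos_sq (k * x), abs_cos_le_one (k * x), h k hk, sq_abs (cos (k * x))]
    obtain ⟨m, hm⟩ := sin_eq_zero_iff.1 hsin
    exact ⟨m, by simpa using hm⟩
  obtain ⟨m, hm⟩ := (hprim ▸ hle) (AddSubgroup.mem_top 1)
  simp only [zmultiplesHom_apply, one_smul, zsmul_eq_mul] at hm
  rcases le_or_gt m 0 with hm0 | hm0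
  · nlinarith [hx.1, pi_pos, (Int.cast_nonpos.2 hm0 : (m : ℝ) ≤ 0)]
  · nlinarith [hx.2, pi_pos, (by exact_mod_cast hm0 : (1 : ℝ) ≤ m)]

lemma abs_cosSeries_lt_one (h0 : ∀ k, 0 ≤ a k) (h1 : HasSum a 1)
    (hprim : AddSubgroup.closure {k : ℤ | a k ≠ 0} = ⊤) {x : ℝ} (hx : x ∈ Ioo 0 π) :
    |cosSeries a x| < 1 := by
  obtain ⟨k₀, hk₀, hcos⟩ := exists_abs_cos_lt_one hprim hx
  have habs : ∀ k : ℤ, |a k * cos (k * x)| = a k * |cos (k * x)| := fun k => by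
    rw [abs_mul, abs_of_nonneg (h0 k)]
  calc |cosSeries a x| ≤ ∑' k : ℤ, |a k * cos (k * x)| :=
        norm_tsum_le_tsum_norm (summable_mul_cos h1.summable x).norm
    _ < ∑' k : ℤ, a k := by
        refine Summable.tsum_lt_tsum (i := k₀) (fun k => ?_) ?_ (summable_mul_cos h1.summable x).abs
          h1.summable
        · rw [habs]; exact mul_le_of_le_one_right (h0 k) (abs_cos_le_one _)
        · rw [habs]; exact mul_lt_of_lt_one_right ((h0 k₀).lt_of_ne' hk₀) hcos
    _ = 1 := h1.tsum_eq

end CosSeries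

section ReturnProb

variable {a : ℤ → ℝ}

lemma charFun_pow (ha : Summable a) (n : ℕ) (x : ℝ) :
    charFun a x ^ n = ∑' k : Fin n → ℤ,
      ((∏ i, a (k i) : ℝ) : ℂ) * Complex.exp (Complex.I * (∑ i, k i : ℤ) * x) := by
  have hf : Summable fun k : ℤ => ‖(a k : ℂ) * Complex.exp (Complex.I * k * x)‖ := by
    simpa [norm_exp_I_mul_int_mul] using ha.norm
  rw [charFun, tsum_pow_eq_tsum_prod hf]
  refine tsum_congr fun k => ?_
  rw [Finset.prod_mul_distrib, ← Complex.exp_sum]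
  push_cast
  simp only [Finset.mul_sum, Finset.sum_mul]

lemma integral_charFun_pow (h0 : ∀ k, 0 ≤ a k) (ha : Summable a) (n : ℕ) :
    ∫ x in -π..π, charFun a x ^ n = ((2 * π * returnProb a n : ℝ) : ℂ) := by
  have hle : -π ≤ π := by linarith [pi_pos]
  have hnorm : ∀ (k : Fin n → ℤ) (x : ℝ), ‖((∏ i, a (k i) : ℝ) : ℂ) *
      Complex.exp (Complex.I * (∑ i, k i : ℤ) * x)‖ = ∏ i, a (k i) := fun k x => by
    rw [norm_mul, norm_exp_I_mul_int_mul, mul_one, Complex.norm_real, Real.norm_eq_abs,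
      abs_of_nonneg (Finset.prod_nonneg fun i _ => h0 _)]
  simp_rw [intervalIntegral.integral_of_le hle, charFun_pow ha]
  rw [← integral_tsum_of_summable_integral_norm fun k => Continuous.integrableOn_Ioc (by fun_prop)]
  · simp_rw [integral_const_mul, ← intervalIntegral.integral_of_le hle, integral_exp_I_mul_int_mul,
      returnProb, Complex.ofReal_mul, Complex.ofReal_tsum, ← tsum_mul_left]
    refine tsum_congr fun k => ?_
    split_ifs <;> push_cast <;> ring
  · simp_rw [hnorm, integral_const]
    exact (summable_prod_fin h0 ha n).const_smul _

lemma two_pi_mul_returnProb_eq_integral (h0 : ∀ k, 0 ≤ a k) (ha : Summable a)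
    (hsym : ∀ k, a k = a (-k)) (n : ℕ) :
    2 * π * returnProb a n = ∫ x in -π..π, cosSeries a x ^ n := by
  have := integral_charFun_pow h0 ha n
  simp_rw [charFun_eq_cosSeries ha hsym, ← Complex.ofReal_pow,
    intervalIntegral.integral_ofReal] at this
  exact_mod_cast this.symm

lemma returnProb_two_mul_eq_integral (h0 : ∀ k, 0 ≤ a k) (ha : Summable a)
    (hsym : ∀ k, a k = a (-k)) (hodd : ∀ k : ℤ, a k ≠ 0 → Odd k) (n : ℕ) :
    returnProb a (2 * n) = 2 / π * ∫ x in 0..π / 2, cosSeries a x ^ (2 * n) := by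
  have h := two_pi_mul_returnProb_eq_integral h0 ha hsym (2 * n)
  rw [integral_eq_four_mul_integral_of_symm (h := fun x => cosSeries a x ^ (2 * n))
    ((continuous_cosSeries ha).pow _) π (fun x => by rw [cosSeries_neg])
    (fun x => by rw [cosSeries_pi_sub hodd, (even_two_mul n).neg_pow])] at h
  field_simp at h ⊢
  linarith [pi_pos]

lemma returnProb_two_mul_add_integral_eq (h0 : ∀ k, 0 ≤ a k) (ha : Summable a)
    (hsym : ∀ k, a k = a (-k)) (hodd : ∀ k : ℤ, a k ≠ 0 → Odd k) {φ : ℝ → ℝ} {u : ℝ} (hu : u ≤ 1)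
    (hcont : ContinuousOn φ (Icc u 1)) (hdiff : ∀ y ∈ Ioo u 1, DifferentiableAt ℝ φ y)
    (hanti : AntitoneOn φ (Icc u 1)) (hone : φ 1 = 0) (hinv : LeftInvOn (cosSeries a) φ (Icc u 1))
    (n : ℕ) :
    returnProb a (2 * n) + 2 / π * ∫ y in u..1, y ^ (2 * n) * deriv φ y
      = 2 / π * ∫ x in φ u..π / 2, cosSeries a x ^ (2 * n) := by
  have hG := continuous_cosSeries ha
  have hGpow : Continuous fun x => cosSeries a x ^ (2 * n) := hG.pow _
  rw [returnProb_two_mul_eq_integral h0 ha hsym hodd, integral_comp_mul_deriv_of_leftInvOn hu hcont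
    hdiff (AntitoneOn.intervalIntegrable_deriv (by rwa [uIcc_of_le hu])) hinv hG (continuous_pow _),
    hone, ← mul_add, add_comm, intervalIntegral.integral_add_adjacent_intervals
    (hGpow.intervalIntegrable _ _) (hGpow.intervalIntegrable _ _)]

end ReturnProb

theorem returnProb_integral_estimate_type2_general (a : ℤ → ℝ) (ha : IsRandomWalk a)
    (hsym : ∀ n : ℤ, a n = a (-n))
    (hprim : AddSubgroup.closure {n : ℤ | a n ≠ 0} = ⊤)
    (hodd : ∀ n : ℤ, a n ≠ 0 → Odd n)
    (η : ℝ) (hη : η ∈ Set.Ioo (0 : ℝ) 1) (φ : ℝ → ℝ)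
    (hmaps : ∀ y ∈ Set.Icc (1 - η) 1, φ y ∈ Set.Icc 0 (Real.pi / 2))
    (hcont : ContinuousOn φ (Set.Icc (1 - η) 1))
    (hdiff : ∀ y ∈ Set.Ioo (1 - η) 1, DifferentiableAt ℝ φ y)
    (hone : φ 1 = 0)
    (hinv : ∀ y ∈ Set.Icc (1 - η) 1, charFun a (φ y) = (y : ℂ)) :
    ∃ μ : ℝ, 0 < μ ∧
      (fun n : ℕ =>
          returnProb a (2 * n) + (2 / Real.pi) * ∫ y in (1 - η)..1, y ^ (2 * n) * deriv φ y)
        =o[Filter.atTop] fun n : ℕ => Real.exp (-(2 * μ) * n) := by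
  have hsum := ha.hasSum
  have hle : 1 - η ≤ 1 := by linarith [hη.1]
  have hleft : 1 - η ∈ Icc (1 - η) 1 := ⟨le_rfl, hle⟩
  have hinvG : LeftInvOn (cosSeries a) φ (Icc (1 - η) 1) := fun y hy => by
    exact_mod_cast (charFun_eq_cosSeries hsum.summable hsym (φ y)).symm.trans (hinv y hy)
  have hpos : 0 < φ (1 - η) := (hmaps _ hleft).1.lt_of_ne fun h => by
    have := hinvG hleft
    rw [← h, cosSeries_zero, hsum.tsum_eq] at this
    linarith [hη.1]
  have hanti : AntitoneOn φ (Icc (1 - η) 1) :=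
    (hcont.strictAntiOn_of_injOn_Icc hle (hone ▸ hpos.le) hinvG.injOn).antitoneOn
  obtain ⟨μ, hμ, ho⟩ := exists_isLittleO_integral_pow (hmaps _ hleft).2
    (continuous_cosSeries hsum.summable).continuousOn fun x hx =>
      abs_cosSeries_lt_one ha.1 hsum hprim ⟨hpos.trans_le hx.1, by linarith [hx.2, pi_pos]⟩
  refine ⟨μ, hμ, ?_⟩
  simp_rw [returnProb_two_mul_add_integral_eq ha.1 hsum.summable hsym hodd hle hcont hdiff hanti
    hone hinvG]
  refine ((ho.comp_tendsto (tendsto_id.const_mul_atTop' two_pos)).const_mul_left (2 / π))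
    |>.congr_right fun n => ?_
  simp only [Function.comp_apply, id, Nat.cast_mul, Nat.cast_ofNat]
  ring_nf

/-- Type 2 estimate: for a symmetric, primitive random walk with all step sizes odd,
`c_(2n) + (2/π) ∫_(1-η)^1 y^(2n) φ'(y) dy = o(e^(-2μn))` for some `μ > 0`, where `φ`
is a local inverse of the characteristic function. -/
theorem returnProb_integral_estimate_type2 (a : ℤ → ℝ) (ha : IsRandomWalk a)
    (hsym : ∀ n : ℤ, a n = a (-n))
    (hprim : AddSubgroup.closure {n : ℤ | a n ≠ 0} = ⊤)
    (hodd : ∀ n : ℤ, a n ≠ 0 → Odd n)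
    (η : ℝ) (hη : η ∈ Set.Ioo (0 : ℝ) 1) (φ : ℝ → ℝ)
    (hmaps : ∀ y ∈ Set.Icc (1 - η) 1, φ y ∈ Set.Icc 0 (Real.pi / 2))
    (hcont : ContinuousOn φ (Set.Icc (1 - η) 1))
    (hdiff : ∀ y ∈ Set.Ioo (1 - η) 1, DifferentiableAt ℝ φ y)
    (hderiv_cont : ContinuousOn (deriv φ) (Set.Ioo (1 - η) 1))
    (hone : φ 1 = 0)
    (hinv : ∀ y ∈ Set.Icc (1 - η) 1, charFun a (φ y) = (y : ℂ)) :
    ∃ μ : ℝ, 0 < μ ∧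
      (fun n : ℕ =>
          returnProb a (2 * n) + (2 / Real.pi) * ∫ y in (1 - η)..1, y ^ (2 * n) * deriv φ y)
        =o[Filter.atTop] fun n : ℕ => Real.exp (-(2 * μ) * n) :=
  returnProb_integral_estimate_type2_general a ha hsym hprim hodd η hη φ hmaps hcont hdiff hone hinv
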